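/- arXiv:1802.07963 — 8 statements merged into one kernel-verified Lean document; each statement's English description precedes it below -/
import Mathlib

section
/- For each fixed μ > 0, the sequence ε_n(μ) = nπ - κ_n(μ) tends to 0 as n → ∞. -/
/-! Since `tan` is `π`-periodic and odd, `κ_n tan κ_n + μ = 0` says `tan ε_n = μ / κ_n`, and
`ε_n ∈ (-π/2, π/2)`, so `ε_n = arctan (μ / κ_n)`. As `κ_n > (2n - 1)π/2 → ∞`, this tends to
`arctan 0 = 0`. -/

open Real Filter

theorem nat_mul_pi_sub_eq_arctan_div {κ μ : ℝ} (n : ℕ) (hκ : κ ≠ 0) (h : κ * tan κ + μ = 0)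
    (hε : (n : ℝ) * π - κ ∈ Set.Ioo (-(π / 2)) (π / 2)) :
    (n : ℝ) * π - κ = arctan (μ / κ) := by
  refine (arctan_eq_of_tan_eq ?_ hε).symm
  rw [tan_nat_mul_pi_sub, eq_div_iff hκ]
  linarith

theorem tendsto_arctan_div_atTop {ι : Type*} {l : Filter ι} {f : ι → ℝ}
    (hf : Tendsto f l atTop) (μ : ℝ) : Tendsto (fun i => arctan (μ / f i)) l (nhds 0) := by
  simpa [Function.comp_def] using
    (continuous_arctan.tendsto 0).comp (tendsto_const_nhds.div_atTop hf)

theorem eps_tendsto_zero_in_n_general (μ : ℝ) (κ : ℕ → ℝ)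
    (hκ : ∀ n : ℕ, 1 ≤ n →
      κ n ∈ Set.Ioo ((2 * (n : ℝ) - 1) * π / 2) ((2 * (n : ℝ) + 1) * π / 2) ∧
      κ n * Real.tan (κ n) + μ = 0) :
    Tendsto (fun n : ℕ => (n : ℝ) * π - κ n) atTop (nhds 0) := by
  have hlower : Tendsto (fun n : ℕ => (2 * (n : ℝ) - 1) * π / 2) atTop atTop := by
    refine Tendsto.atTop_div_const (by positivity) (Tendsto.atTop_mul_const pi_pos ?_)
    exact tendsto_atTop_add_const_right _ _
      (tendsto_natCast_atTop_atTop.const_mul_atTop two_pos)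
  have hκ_top : Tendsto κ atTop atTop :=
    tendsto_atTop_mono' _ (eventually_ge_atTop 1 |>.mono fun n hn => (hκ n hn).1.1.le) hlower
  refine (tendsto_arctan_div_atTop hκ_top μ).congr' ?_
  filter_upwards [eventually_ge_atTop 1, hκ_top.eventually_gt_atTop 0] with n hn hpos
  obtain ⟨⟨hlo, hhi⟩, hroot⟩ := hκ n hn
  refine (nat_mul_pi_sub_eq_arctan_div n hpos.ne' hroot ⟨?_, ?_⟩).symm <;> linarith

theorem eps_tendsto_zero_in_n (μ : ℝ) (hμ : 0 < μ) (κ : ℕ → ℝ)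
    (hκ : ∀ n : ℕ, 1 ≤ n →
      κ n ∈ Set.Ioo ((2 * (n : ℝ) - 1) * π / 2) ((2 * (n : ℝ) + 1) * π / 2) ∧
      κ n * Real.tan (κ n) + μ = 0) :
    Tendsto (fun n : ℕ => (n : ℝ) * π - κ n) atTop (nhds 0) :=
  eps_tendsto_zero_in_n_general μ κ hκ
end

section
/- For each fixed positive integer n, ε_n(μ) = nπ - κ_n(μ) tends to 0 as μ → 0⁺. -/
/-!
Put `ε = nπ - κ`. Then `|ε| < π/2`, and by periodicity `tan κ = -tan ε`, so the equation
becomes `κ tan ε = μ`. Since `κ > π/2 > 1` and `μ > 0`, this forces `0 < ε`, and then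
`ε < tan ε < κ tan ε = μ`; squeeze.
-/

open Real Filter

namespace Real

lemma pos_of_tan_pos {x : ℝ} (hx : -(π / 2) < x) (htan : 0 < tan x) : 0 < x := by
  by_contra! hx0
  exact (tan_nonpos_of_nonpos_of_neg_pi_div_two_le hx0 hx.le).not_gt htan

lemma mem_Ioo_of_mul_tan_eq {k x μ : ℝ} (hk : 1 ≤ k) (hx : x ∈ Set.Ioo (-(π / 2)) (π / 2))
    (hμ : 0 < μ) (h : k * tan x = μ) : x ∈ Set.Ioo 0 μ := by
  have htan : 0 < tan x := pos_of_mul_pos_right (h ▸ hμ) (by linarith)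
  have hx0 : 0 < x := pos_of_tan_pos hx.1 htan
  refine ⟨hx0, ?_⟩
  calc x < tan x := lt_tan hx0 hx.2
    _ ≤ k * tan x := le_mul_of_one_le_left htan.le hk
    _ = μ := h

lemma nat_mul_pi_sub_mem_Ioo_of_mul_tan_add_eq_zero {n : ℕ} (hn : 1 ≤ n) {κ μ : ℝ} (hμ : 0 < μ)
    (hκ : κ ∈ Set.Ioo ((2 * (n : ℝ) - 1) * π / 2) ((2 * (n : ℝ) + 1) * π / 2))
    (h : κ * tan κ + μ = 0) : n * π - κ ∈ Set.Ioo 0 μ := by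
  have hn' : (1 : ℝ) ≤ n := by exact_mod_cast hn
  have hκ1 : 1 ≤ κ := by nlinarith [pi_gt_three, hκ.1]
  have hε : n * π - κ ∈ Set.Ioo (-(π / 2)) (π / 2) := ⟨by linarith [hκ.2], by linarith [hκ.1]⟩
  refine mem_Ioo_of_mul_tan_eq hκ1 hε hμ ?_
  have htan : tan κ = -tan (n * π - κ) := by rw [tan_nat_mul_pi_sub, neg_neg]
  rw [htan] at h
  linarith

end Real

theorem eps_tendsto_zero_mu_to_zero (n : ℕ) (hn : 1 ≤ n) (κ : ℝ → ℝ)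
    (hκ : ∀ μ : ℝ, 0 < μ →
      κ μ ∈ Set.Ioo ((2 * (n : ℝ) - 1) * π / 2) ((2 * (n : ℝ) + 1) * π / 2) ∧
      κ μ * Real.tan (κ μ) + μ = 0) :
    Tendsto (fun μ : ℝ => (n : ℝ) * π - κ μ) (nhdsWithin 0 (Set.Ioi 0)) (nhds 0) := by
  have hbound : ∀ μ ∈ Set.Ioi (0 : ℝ), (n : ℝ) * π - κ μ ∈ Set.Ioo 0 μ := fun μ hμ =>
    nat_mul_pi_sub_mem_Ioo_of_mul_tan_add_eq_zero hn hμ (hκ μ hμ).1 (hκ μ hμ).2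
  refine tendsto_of_tendsto_of_tendsto_of_le_of_le' tendsto_const_nhds
    (tendsto_id.mono_left nhdsWithin_le_nhds) ?_ ?_
  · filter_upwards [self_mem_nhdsWithin] with μ hμ using (hbound μ hμ).1.le
  · filter_upwards [self_mem_nhdsWithin] with μ hμ using (hbound μ hμ).2.le
end

section
/- For each fixed positive integer n, ε_n(μ) = nπ - κ_n(μ) tends to π/2 as μ → ∞ (equivalently, κ_n(μ) → (2n-1)π/2). -/
/-! Shift the root into the principal branch: `y = κ_n(μ) - nπ ∈ (-π/2, π/2)` has
`tan y = tan κ_n(μ) = -μ / κ_n(μ)`, and since `0 < κ_n(μ) < (2n+1)π/2` this tends to `-∞`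
as `μ → ∞`. Hence `y = arctan (tan y) → -π/2`, i.e. `κ_n(μ) → nπ - π/2` and `ε_n(μ) → π/2`. -/

open Real Filter Topology

theorem tendsto_neg_div_atBot_of_bounded {g : ℝ → ℝ} {K : ℝ} (hK : 0 < K)
    (hg : ∀ᶠ μ in atTop, 0 < g μ ∧ g μ ≤ K) :
    Tendsto (fun μ => -μ / g μ) atTop atBot := by
  have hlin : Tendsto (fun μ : ℝ => -(μ / K)) atTop atBot :=
    tendsto_neg_atTop_atBot.comp (tendsto_id.atTop_div_const hK)
  refine tendsto_atBot_mono' atTop ?_ hlin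
  filter_upwards [hg, eventually_ge_atTop 0] with μ ⟨hg0, hgK⟩ hμ
  rw [neg_div, neg_le_neg_iff]
  exact div_le_div_of_nonneg_left hμ hg0 hgK

theorem tendsto_nhds_neg_pi_div_two_of_tendsto_tan_atBot {α : Type*} {l : Filter α}
    {f : α → ℝ} (hf : ∀ᶠ x in l, f x ∈ Set.Ioo (-(π / 2)) (π / 2))
    (htan : Tendsto (fun x => tan (f x)) l atBot) :
    Tendsto f l (𝓝 (-(π / 2))) := by
  have harctan : Tendsto (fun x => arctan (tan (f x))) l (𝓝 (-(π / 2))) :=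
    (tendsto_arctan_atBot.mono_right nhdsWithin_le_nhds).comp htan
  exact harctan.congr' (hf.mono fun x hx => arctan_tan hx.1 hx.2)

theorem eps_tendsto_pi_half_mu_to_infty (n : ℕ) (hn : 1 ≤ n) (κ : ℝ → ℝ)
    (hκ : ∀ μ : ℝ, 0 < μ →
      κ μ ∈ Set.Ioo ((2 * (n : ℝ) - 1) * π / 2) ((2 * (n : ℝ) + 1) * π / 2) ∧
      κ μ * Real.tan (κ μ) + μ = 0) :
    Tendsto (fun μ : ℝ => (n : ℝ) * π - κ μ) atTop (nhds (π / 2)) ∧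
      Tendsto κ atTop (nhds ((2 * (n : ℝ) - 1) * π / 2)) := by
  have hroot := (eventually_gt_atTop 0).mono hκ
  have hlow_pos : 0 < (2 * (n : ℝ) - 1) * π / 2 := by
    have : (1 : ℝ) ≤ n := by exact_mod_cast hn
    exact div_pos (mul_pos (by linarith) pi_pos) two_pos
  have hshift : ∀ᶠ μ in atTop, κ μ - n * π ∈ Set.Ioo (-(π / 2)) (π / 2) := by
    filter_upwards [hroot] with μ ⟨⟨hlo, hhi⟩, _⟩
    constructor <;> linarith
  have hbounded : ∀ᶠ μ in atTop, 0 < κ μ ∧ κ μ ≤ (2 * (n : ℝ) + 1) * π / 2 := by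
    filter_upwards [hroot] with μ ⟨⟨hlo, hhi⟩, _⟩
    exact ⟨by linarith, hhi.le⟩
  have htan_eq : ∀ᶠ μ in atTop, -μ / κ μ = tan (κ μ - n * π) := by
    filter_upwards [hroot, hbounded] with μ ⟨_, hμ⟩ ⟨hpos, _⟩
    rw [tan_sub_nat_mul_pi, div_eq_iff hpos.ne']
    linear_combination -hμ
  have htan : Tendsto (fun μ => tan (κ μ - n * π)) atTop atBot :=
    (tendsto_neg_div_atBot_of_bounded (by linarith [pi_pos]) hbounded).congr' htan_eq
  have hlim := tendsto_nhds_neg_pi_div_two_of_tendsto_tan_atBot hshift htan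
  constructor
  · convert hlim.neg using 2 <;> ring
  · convert hlim.add_const (n * π) using 2 <;> ring
end

section
/- For each fixed μ > 0, the sequence ε_n(μ) = nπ - κ_n(μ) is strictly decreasing in n: ε_{n+1}(μ) < ε_n(μ) for all integers n ≥ 1. -/
/-!
Reflecting `κ ↦ nπ - κ` turns the root equation `κ tan κ + μ = 0` into `tan ε_n = μ / κ_n`
with `ε_n ∈ (-π/2, π/2)`. Since `κ_n < κ_{n+1}`, the right-hand side strictly decreases in `n`,
and `tan` is strictly increasing on `(-π/2, π/2)`.
-/

open Real

lemma nat_mul_pi_sub_mem_Ioo {m : ℕ} {κ : ℝ}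
    (h : κ ∈ Set.Ioo ((2 * (m : ℝ) - 1) * π / 2) ((2 * (m : ℝ) + 1) * π / 2)) :
    (m : ℝ) * π - κ ∈ Set.Ioo (-(π / 2)) (π / 2) := by
  obtain ⟨h₁, h₂⟩ := h
  constructor <;> linarith

lemma tan_nat_mul_pi_sub_eq_div_of_mul_tan_add_eq_zero {m : ℕ} {μ κ : ℝ} (hκ : κ ≠ 0)
    (h : κ * tan κ + μ = 0) : tan (m * π - κ) = μ / κ := by
  rw [tan_nat_mul_pi_sub, eq_div_iff hκ]
  linarith

theorem eps_strict_decreasing_in_n (μ : ℝ) (hμ : 0 < μ) (κ : ℕ → ℝ)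
    (hκ : ∀ n : ℕ, 1 ≤ n →
      κ n ∈ Set.Ioo ((2 * (n : ℝ) - 1) * π / 2) ((2 * (n : ℝ) + 1) * π / 2) ∧
      κ n * Real.tan (κ n) + μ = 0) :
    ∀ n : ℕ, 1 ≤ n → ((n : ℝ) + 1) * π - κ (n + 1) < (n : ℝ) * π - κ n := by
  intro n hn
  obtain ⟨hmem, hroot⟩ := hκ n hn
  obtain ⟨hmem', hroot'⟩ := hκ (n + 1) (by omega)
  have hn_one : (1 : ℝ) ≤ n := by exact_mod_cast hn
  have hpos : 0 < κ n := by nlinarith [hmem.1, pi_pos]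
  have hlt : κ n < κ (n + 1) := by
    push_cast at hmem'
    linarith [hmem.2, hmem'.1]
  have hε := nat_mul_pi_sub_mem_Ioo hmem
  have hε' := nat_mul_pi_sub_mem_Ioo hmem'
  have htan := tan_nat_mul_pi_sub_eq_div_of_mul_tan_add_eq_zero (m := n) hpos.ne' hroot
  have htan' := tan_nat_mul_pi_sub_eq_div_of_mul_tan_add_eq_zero (m := n + 1)
    (hpos.trans hlt).ne' hroot'
  push_cast at hε' htan'
  rw [← strictMonoOn_tan.lt_iff_lt hε' hε, htan, htan']
  exact div_lt_div_of_pos_left hμ hpos hlt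
end

section
/- For each fixed integer n ≥ 1, ε_n(μ) = nπ - κ_n(μ) is strictly increasing as a function of μ on (0, ∞). -/
/-!
Eliminating `μ` from the defining equation gives `κ_n(μ) tan κ_n(μ) = -μ`, so it suffices that
`x ↦ x tan x` is strictly increasing on each branch `((2n-1)π/2, (2n+1)π/2)` with `n ≥ 1`: then
`κ_n` is strictly decreasing and `ε_n = nπ - κ_n` strictly increasing. The derivative is
`tan x + x (1 + tan² x)`, a quadratic in `tan x` with negative discriminant `1 - 4x²` once `x > 1/2`.
-/

open Real Set

theorem Real.cos_ne_zero_of_mem_Ioo_branch (k : ℤ) {x : ℝ}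
    (hx : x ∈ Ioo ((2 * (k : ℝ) - 1) * π / 2) ((2 * (k : ℝ) + 1) * π / 2)) : cos x ≠ 0 := by
  have hpos : 0 < cos (x - k * π) :=
    cos_pos_of_mem_Ioo ⟨by linarith [hx.1], by linarith [hx.2]⟩
  rw [cos_sub_int_mul_pi] at hpos
  rintro hcos
  simp [hcos] at hpos

theorem Real.hasDerivAt_mul_tan {x : ℝ} (hx : cos x ≠ 0) :
    HasDerivAt (fun y => y * tan y) (tan x + x * (1 + tan x ^ 2)) x := by
  have hsec : 1 / cos x ^ 2 = 1 + tan x ^ 2 := by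
    rw [tan_eq_sin_div_cos]
    field_simp
    linarith [sin_sq_add_cos_sq x]
  have h := (hasDerivAt_id' x).mul (hasDerivAt_tan hx)
  rwa [hsec, one_mul] at h

theorem Real.strictMonoOn_mul_tan {s : Set ℝ} (hs : Convex ℝ s)
    (hcos : ∀ x ∈ s, cos x ≠ 0) (hhalf : ∀ x ∈ s, 1 / 2 < x) :
    StrictMonoOn (fun x => x * tan x) s := by
  refine strictMonoOn_of_deriv_pos hs
    (fun x hx => (hasDerivAt_mul_tan (hcos x hx)).continuousAt.continuousWithinAt) ?_
  intro x hx
  have hxs := interior_subset hx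
  rw [(hasDerivAt_mul_tan (hcos x hxs)).deriv]
  have hx_half := hhalf x hxs
  -- `4x (tan x + x (1 + tan² x)) = (2x tan x + 1)² + 4x² - 1`
  nlinarith [sq_nonneg (2 * x * tan x + 1)]

theorem Real.strictMonoOn_mul_tan_branch (k : ℤ) (hk : 1 ≤ k) :
    StrictMonoOn (fun x => x * tan x)
      (Ioo ((2 * (k : ℝ) - 1) * π / 2) ((2 * (k : ℝ) + 1) * π / 2)) := by
  refine strictMonoOn_mul_tan (convex_Ioo _ _)
    (fun x hx => cos_ne_zero_of_mem_Ioo_branch k hx) fun x hx => ?_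
  have hk' : (1 : ℝ) ≤ k := by exact_mod_cast hk
  nlinarith [hx.1, pi_gt_three]

theorem eps_strict_increasing_in_mu (n : ℕ) (hn : 1 ≤ n) (κ : ℝ → ℝ)
    (hκ : ∀ μ : ℝ, 0 < μ →
      κ μ ∈ Set.Ioo ((2 * (n : ℝ) - 1) * π / 2) ((2 * (n : ℝ) + 1) * π / 2) ∧
      κ μ * Real.tan (κ μ) + μ = 0) :
    StrictMonoOn (fun μ : ℝ => (n : ℝ) * π - κ μ) (Set.Ioi 0) := by
  intro μ₁ hμ₁ μ₂ hμ₂ hlt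
  obtain ⟨hmem₁, heq₁⟩ := hκ μ₁ hμ₁
  obtain ⟨hmem₂, heq₂⟩ := hκ μ₂ hμ₂
  have hmono := strictMonoOn_mul_tan_branch n (by exact_mod_cast hn)
  push_cast at hmono
  have hκ_lt : κ μ₂ < κ μ₁ := (hmono.lt_iff_lt hmem₂ hmem₁).mp (by linarith)
  simp only
  linarith
end

section
/- The map φ(ε) = Arctan(μ/(nπ - ε)) maps the interval (0, π/2) into itself (for n ≥ 1 and μ > 0), and its unique fixed point in (0, π/2) is ε_n(μ) = nπ - κ_n(μ). -/
/-!
Let `D = nπ - ε`. Since `D > π/2`, the map `φ(ε) = arctan (μ / D)` lands in `(0, π/2)`, and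
`ε₀ = nπ - κ` is a fixed point because `tan (nπ - κ) = -tan κ = μ / κ`. Uniqueness comes from
`ε ↦ ε - φ ε` being strictly increasing: by the subtraction formula for `arctan`,
`φ ε₂ - φ ε₁ ≤ μ (ε₂ - ε₁) / (D₁ D₂ + μ²) < ε₂ - ε₁`, because `D₁ D₂ > 1/4 ≥ μ - μ²`.
-/

open Real Set

theorem Real.arctan_le_self {x : ℝ} (hx : 0 ≤ x) : arctan x ≤ x :=
  calc arctan x ≤ tan (arctan x) := le_tan (arctan_nonneg.mpr hx) (arctan_lt_pi_div_two x)
    _ = x := tan_arctan x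

theorem Real.arctan_sub_arctan {a b : ℝ} (h : -1 < a * b) :
    arctan b - arctan a = arctan ((b - a) / (1 + a * b)) := by
  rw [sub_eq_add_neg, ← arctan_neg, arctan_add (by linarith)]
  congr 1
  ring

theorem Real.arctan_div_sub_arctan_div_lt {μ x y : ℝ} (hμ : 0 < μ) (hx : 1 / 2 < x)
    (hxy : x < y) : arctan (μ / x) - arctan (μ / y) < y - x := by
  have hy : 0 < y := by linarith
  have hxy_pos : 0 < x * y + μ ^ 2 := by positivity
  have hdiff : (μ / x - μ / y) / (1 + μ / y * (μ / x)) = μ * (y - x) / (x * y + μ ^ 2) := by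
    field_simp
  have hμ_lt : μ < x * y + μ ^ 2 := by nlinarith [sq_nonneg (μ - 1 / 2)]
  calc arctan (μ / x) - arctan (μ / y)
      = arctan (μ * (y - x) / (x * y + μ ^ 2)) := by
        rw [arctan_sub_arctan (neg_one_lt_zero.trans (by positivity)), hdiff]
    _ ≤ μ * (y - x) / (x * y + μ ^ 2) :=
        arctan_le_self (div_nonneg (mul_nonneg hμ.le (by linarith)) hxy_pos.le)
    _ < y - x := by
        rw [div_lt_iff₀ hxy_pos]
        nlinarith

noncomputable def picardMap (n : ℕ) (μ ε : ℝ) : ℝ := arctan (μ / (n * π - ε))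

section

variable {n : ℕ} {μ κ : ℝ}

theorem half_pi_lt_nat_mul_pi_sub (hn : 1 ≤ n) {ε : ℝ} (hε : ε < π / 2) :
    π / 2 < n * π - ε := by
  have : π ≤ n * π := le_mul_of_one_le_left pi_pos.le (by exact_mod_cast hn)
  linarith

theorem picardMap_mem_Ioo (hn : 1 ≤ n) (hμ : 0 < μ) {ε : ℝ} (hε : ε < π / 2) :
    picardMap n μ ε ∈ Ioo 0 (π / 2) :=
  ⟨arctan_pos.mpr (div_pos hμ (pi_div_two_pos.trans (half_pi_lt_nat_mul_pi_sub hn hε))),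
    arctan_lt_pi_div_two _⟩

theorem strictMonoOn_sub_picardMap (hn : 1 ≤ n) (hμ : 0 < μ) :
    StrictMonoOn (fun ε => ε - picardMap n μ ε) (Iio (π / 2)) := by
  intro ε₁ _ ε₂ hε₂ hlt
  have hD₂ := half_pi_lt_nat_mul_pi_sub hn hε₂
  have hcontract :=
    arctan_div_sub_arctan_div_lt hμ (by linarith [pi_gt_three]) (sub_lt_sub_left hlt (n * π))
  simp only [picardMap]
  linarith

theorem lt_nat_mul_pi_of_mul_tan_add_eq_zero (hμ : 0 < μ) (hκ_pos : 0 < κ)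
    (hκ_lt : κ < n * π + π / 2) (hroot : κ * tan κ + μ = 0) : κ < n * π := by
  by_contra! h
  have htan : 0 ≤ tan κ := by
    rw [← tan_sub_nat_mul_pi κ n]
    exact tan_nonneg_of_nonneg_of_le_pi_div_two (by linarith) (by linarith)
  nlinarith

theorem picardMap_nat_mul_pi_sub (hκ : κ ≠ 0) (hroot : κ * tan κ + μ = 0)
    (hmem : n * π - κ ∈ Ioo (-(π / 2)) (π / 2)) : picardMap n μ (n * π - κ) = n * π - κ := by
  have htan : tan (n * π - κ) = μ / κ := by
    rw [tan_nat_mul_pi_sub, eq_div_iff hκ]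
    linarith
  rw [picardMap, sub_sub_cancel]
  exact arctan_eq_of_tan_eq htan hmem

end

theorem picard_map_fixed_point (n : ℕ) (hn : 1 ≤ n) (μ : ℝ) (hμ : 0 < μ) (κ : ℝ)
    (hκmem : κ ∈ Set.Ioo ((2 * (n : ℝ) - 1) * π / 2) ((2 * (n : ℝ) + 1) * π / 2))
    (hκroot : κ * Real.tan κ + μ = 0) :
    (∀ ε ∈ Set.Ioo 0 (π / 2),
        Real.arctan (μ / ((n : ℝ) * π - ε)) ∈ Set.Ioo 0 (π / 2)) ∧
      (∀ ε ∈ Set.Ioo 0 (π / 2),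
        Real.arctan (μ / ((n : ℝ) * π - ε)) = ε ↔ ε = (n : ℝ) * π - κ) := by
  obtain ⟨hκ_gt, hκ_lt⟩ := hκmem
  have hκ_pos : 0 < κ := by
    have : (1 : ℝ) ≤ n := by exact_mod_cast hn
    nlinarith [pi_pos]
  have hκ_lt_nπ := lt_nat_mul_pi_of_mul_tan_add_eq_zero (n := n) hμ hκ_pos (by linarith) hκroot
  have hε₀ : n * π - κ < π / 2 := by linarith
  have hfix := picardMap_nat_mul_pi_sub hκ_pos.ne' hκroot ⟨by linarith [pi_pos], hε₀⟩
  refine ⟨fun ε hε => picardMap_mem_Ioo hn hμ hε.2, fun ε hε => ⟨fun h => ?_, fun h => h ▸ hfix⟩⟩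
  refine (strictMonoOn_sub_picardMap hn hμ).injOn hε.2 hε₀ ?_
  rw [show picardMap n μ ε = ε from h, hfix, sub_self, sub_self]
end

section
/- For the compound second-order iteration applied to find κ_n, the asymptotic error estimate |x_{j+1} - κ_n| ≤ δ_n(μ)² r_n(μ) |x_j - κ_n|² + O(|x_j - κ_n|³) holds, where r_n(μ) is the error constant of the underlying Newton–Raphson iteration for f(ε; μ) = nπ - ε - μ cot(ε) and δ_n(μ) = 4μ/((2n-1)²π² + 4μ²). -/
open Real

/-!
The Picard map `x ↦ arctan (μ / x)` sends the root `κ` to `ε_n = nπ - κ`, the zero of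
`f(·; μ)` on the principal branch, and on `x > (2n - 1)π / 2` its derivative
`-μ / (x² + μ²)` is bounded by `δ_n(μ)`. So the Picard step shrinks the error by the factor
`δ_n(μ)`, and the quadratic Newton error, evaluated there, picks up the factor `δ_n(μ)²`.
-/

theorem hasDerivAt_arctan_const_div (μ : ℝ) {t : ℝ} (ht : t ≠ 0) :
    HasDerivAt (fun s => arctan (μ / s)) (-(μ / (t ^ 2 + μ ^ 2))) t := by
  have hdiv : HasDerivAt (fun s : ℝ => μ / s) (μ * -(t ^ 2)⁻¹) t := by
    simpa [div_eq_mul_inv] using (hasDerivAt_inv ht).const_mul μ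
  refine ((hasDerivAt_arctan (μ / t)).comp t hdiv).congr_deriv ?_
  field_simp

theorem abs_arctan_const_div_sub_le {a : ℝ} (ha : 0 ≤ a) (μ : ℝ) {x y : ℝ} (hx : a < x)
    (hy : a < y) :
    |arctan (μ / x) - arctan (μ / y)| ≤ |μ| / (a ^ 2 + μ ^ 2) * |x - y| := by
  have hderiv : ∀ t ∈ Set.Ioi a, HasDerivWithinAt (fun s => arctan (μ / s))
      (-(μ / (t ^ 2 + μ ^ 2))) (Set.Ioi a) t := fun t ht =>
    (hasDerivAt_arctan_const_div μ (ha.trans_lt ht).ne').hasDerivWithinAt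
  have hbound : ∀ t ∈ Set.Ioi a, ‖-(μ / (t ^ 2 + μ ^ 2))‖ ≤ |μ| / (a ^ 2 + μ ^ 2) := by
    intro t ht
    rcases eq_or_ne μ 0 with rfl | hμ
    · simp
    have hat : a ^ 2 ≤ t ^ 2 := pow_le_pow_left₀ ha ht.le 2
    rw [norm_neg, Real.norm_eq_abs, abs_div, abs_of_pos (by positivity : 0 < t ^ 2 + μ ^ 2)]
    gcongr
  exact (convex_Ioi a).norm_image_sub_le_of_norm_hasDerivWithin_le hderiv hbound hy hx

theorem arctan_neg_tan_eq_int_mul_pi_sub (n : ℤ) {κ : ℝ}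
    (hκ : κ ∈ Set.Ioo ((2 * (n : ℝ) - 1) * π / 2) ((2 * (n : ℝ) + 1) * π / 2)) :
    arctan (-tan κ) = n * π - κ := by
  have htan : tan (n * π - κ) = -tan κ := by
    rw [sub_eq_neg_add, tan_periodic.int_mul n, tan_neg]
  rw [← htan, arctan_tan] <;> linarith [hκ.1, hκ.2]

theorem div_eq_neg_tan_of_mul_tan_add_eq_zero {κ μ : ℝ} (h : κ * tan κ + μ = 0) :
    μ / κ = -tan κ := by
  rcases eq_or_ne κ 0 with rfl | hκ
  · simp
  rw [div_eq_iff hκ]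
  linarith

theorem exists_quadratic_error_comp {φ N : ℝ → ℝ} {κ δ ρ₀ r : ℝ} (hδ : 0 < δ) (hρ₀ : 0 < ρ₀)
    (hr : 0 ≤ r) (hφ : ∀ x, |x - κ| < ρ₀ → |φ x - φ κ| ≤ δ * |x - κ|)
    (hN : ∃ C' > (0 : ℝ), ∃ ρ' > (0 : ℝ), ∀ ε, |ε - φ κ| < ρ' →
      |N ε - φ κ| ≤ r * |ε - φ κ| ^ 2 + C' * |ε - φ κ| ^ 3) :
    ∃ C > (0 : ℝ), ∃ ρ > (0 : ℝ), ∀ x, |x - κ| < ρ →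
      |N (φ x) - φ κ| ≤ δ ^ 2 * r * |x - κ| ^ 2 + C * |x - κ| ^ 3 := by
  obtain ⟨C', hC', ρ', hρ', hNκ⟩ := hN
  refine ⟨C' * δ ^ 3, by positivity, min ρ₀ (ρ' / δ), lt_min hρ₀ (by positivity), ?_⟩
  intro x hx
  have hφx := hφ x (hx.trans_le (min_le_left _ _))
  have hφxρ' : |φ x - φ κ| < ρ' := by
    have := hx.trans_le (min_le_right _ _)
    rw [lt_div_iff₀ hδ] at this
    linarith
  have hφx0 := abs_nonneg (φ x - φ κ)
  calc |N (φ x) - φ κ| ≤ r * |φ x - φ κ| ^ 2 + C' * |φ x - φ κ| ^ 3 := hNκ _ hφxρ'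
    _ ≤ r * (δ * |x - κ|) ^ 2 + C' * (δ * |x - κ|) ^ 3 := by gcongr
    _ = δ ^ 2 * r * |x - κ| ^ 2 + C' * δ ^ 3 * |x - κ| ^ 3 := by ring

theorem compound_second_order_error_general (n : ℕ) (hn : 1 ≤ n) (μ : ℝ) (hμ : 0 < μ) (κ : ℝ)
    (hκmem : κ ∈ Set.Ioo ((2 * (n : ℝ) - 1) * π / 2) ((2 * (n : ℝ) + 1) * π / 2))
    (hκroot : κ * Real.tan κ + μ = 0)
    (N : ℝ → ℝ)
    (r : ℝ) (hr : 0 < r)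
    (hNewton : ∃ C' > (0 : ℝ), ∃ ρ' > (0 : ℝ), ∀ ε : ℝ,
      |ε - ((n : ℝ) * π - κ)| < ρ' →
      |N ε - ((n : ℝ) * π - κ)| ≤ r * |ε - ((n : ℝ) * π - κ)| ^ 2 +
        C' * |ε - ((n : ℝ) * π - κ)| ^ 3) :
    ∃ C > (0 : ℝ), ∃ ρ > (0 : ℝ), ∀ x : ℝ, |x - κ| < ρ →
      |((n : ℝ) * π - N (Real.arctan (μ / x))) - κ| ≤
        (4 * μ / ((2 * (n : ℝ) - 1) ^ 2 * π ^ 2 + 4 * μ ^ 2)) ^ 2 * r * |x - κ| ^ 2 +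
          C * |x - κ| ^ 3 := by
  set a : ℝ := (2 * (n : ℝ) - 1) * π / 2
  have ha : 0 < a := by
    have : (1 : ℝ) ≤ n := by exact_mod_cast hn
    have : (0 : ℝ) < 2 * n - 1 := by linarith
    positivity
  have hδ : 4 * μ / ((2 * (n : ℝ) - 1) ^ 2 * π ^ 2 + 4 * μ ^ 2) = |μ| / (a ^ 2 + μ ^ 2) := by
    rw [abs_of_pos hμ]
    field_simp
    ring
  have hfix : arctan (μ / κ) = n * π - κ := by
    rw [div_eq_neg_tan_of_mul_tan_add_eq_zero hκroot]
    have := arctan_neg_tan_eq_int_mul_pi_sub n (κ := κ)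
    push_cast at this
    exact this hκmem
  have hlip : ∀ x, |x - κ| < κ - a →
      |arctan (μ / x) - arctan (μ / κ)| ≤ |μ| / (a ^ 2 + μ ^ 2) * |x - κ| := fun x hx =>
    abs_arctan_const_div_sub_le ha.le μ (by linarith [(abs_lt.mp hx).1]) hκmem.1
  rw [← hfix] at hNewton
  obtain ⟨C, hC, ρ, hρ, hbound⟩ := exists_quadratic_error_comp (by positivity)
    (sub_pos.mpr hκmem.1) hr.le hlip hNewton
  refine ⟨C, hC, ρ, hρ, fun x hx => ?_⟩
  rw [hδ, ← abs_neg]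
  convert hbound x hx using 3
  rw [hfix]
  ring

theorem compound_second_order_error (n : ℕ) (hn : 1 ≤ n) (μ : ℝ) (hμ : 0 < μ) (κ : ℝ)
    (hκmem : κ ∈ Set.Ioo ((2 * (n : ℝ) - 1) * π / 2) ((2 * (n : ℝ) + 1) * π / 2))
    (hκroot : κ * Real.tan κ + μ = 0)
    (N : ℝ → ℝ)
    (hN : N = fun ε : ℝ =>
      ε - ((n : ℝ) * π - ε - μ * Real.cot ε) /
        deriv (fun ε' : ℝ => (n : ℝ) * π - ε' - μ * Real.cot ε') ε)
    (r : ℝ) (hr : 0 < r)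
    (hNewton : ∃ C' > (0 : ℝ), ∃ ρ' > (0 : ℝ), ∀ ε : ℝ,
      |ε - ((n : ℝ) * π - κ)| < ρ' →
      |N ε - ((n : ℝ) * π - κ)| ≤ r * |ε - ((n : ℝ) * π - κ)| ^ 2 +
        C' * |ε - ((n : ℝ) * π - κ)| ^ 3) :
    ∃ C > (0 : ℝ), ∃ ρ > (0 : ℝ), ∀ x : ℝ, |x - κ| < ρ →
      |((n : ℝ) * π - N (Real.arctan (μ / x))) - κ| ≤
        (4 * μ / ((2 * (n : ℝ) - 1) ^ 2 * π ^ 2 + 4 * μ ^ 2)) ^ 2 * r * |x - κ| ^ 2 +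
          C * |x - κ| ^ 3 :=
  compound_second_order_error_general n hn μ hμ κ hκmem hκroot N r hr hNewton
end

section
/- The explicit approximation error of A_n(μ) = nπ - Arctan(μ/(nπ)) satisfies: A_n(μ) lies in the interval (κ_n(μ), nπ), i.e. it overestimates the true root κ_n(μ), for every μ > 0 and every integer n ≥ 1. -/
open Real

/-! The offset `ε = nπ - κ` of the root satisfies `tan ε = μ / κ` with `|ε| < π / 2`, so
`ε = arctan (μ / κ) > 0`. Hence `0 < κ < nπ`, and since `arctan` is increasing,
`arctan (μ / (nπ)) < arctan (μ / κ) = ε`, i.e. `κ < nπ - arctan (μ / (nπ)) < nπ`. -/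

lemma tan_natCast_mul_pi_sub (n : ℕ) (x : ℝ) : tan (n * π - x) = -tan x := by
  rw [sub_eq_neg_add, tan_periodic.nat_mul n (-x), tan_neg]

lemma natCast_mul_pi_sub_eq_arctan_of_mul_tan_add_eq_zero {n : ℕ} {μ κ : ℝ} (hκ : κ ≠ 0)
    (hκmem : κ ∈ Set.Ioo ((2 * (n : ℝ) - 1) * π / 2) ((2 * (n : ℝ) + 1) * π / 2))
    (hroot : κ * tan κ + μ = 0) :
    n * π - κ = arctan (μ / κ) := by
  have htan : tan (n * π - κ) = μ / κ := by
    rw [tan_natCast_mul_pi_sub, eq_div_iff hκ]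
    linarith
  rw [← htan, arctan_tan] <;> linarith [hκmem.1, hκmem.2]

theorem An_overestimates_root (n : ℕ) (hn : 1 ≤ n) (μ : ℝ) (hμ : 0 < μ) (κ : ℝ)
    (hκmem : κ ∈ Set.Ioo ((2 * (n : ℝ) - 1) * π / 2) ((2 * (n : ℝ) + 1) * π / 2))
    (hκroot : κ * Real.tan κ + μ = 0) :
    (n : ℝ) * π - Real.arctan (μ / ((n : ℝ) * π)) ∈ Set.Ioo κ ((n : ℝ) * π) := by
  have hn' : (1 : ℝ) ≤ n := by exact_mod_cast hn
  have hκpos : 0 < κ := lt_of_le_of_lt (by nlinarith [pi_pos]) hκmem.1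
  have hε := natCast_mul_pi_sub_eq_arctan_of_mul_tan_add_eq_zero hκpos.ne' hκmem hκroot
  have hκlt : κ < n * π := by linarith [arctan_pos.2 (div_pos hμ hκpos)]
  constructor
  · linarith [arctan_strictMono (div_lt_div_of_pos_left hμ hκpos hκlt)]
  · linarith [arctan_pos.2 (div_pos hμ (hκpos.trans hκlt))]
end
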